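/- Let k ≥ 1 be an integer, let u > 0, and let 0 ≤ ρ ≤ u. If X = (X₁, …, X_k) is a vector of k independent standard Gaussian random variables, then P( ‖X‖ ≥ u − ρ ) = P( ‖X‖ ≥ u ) + Σ_{j=1}^∞ (ρ^j / j!) · (-1)^{j-1} · p_k^{(j-1)}(u), where the series converges absolutely and p_k^{(j-1)} denotes the (j−1)-st derivative of p_k. -/

import Mathlib

open MeasureTheory Set ProbabilityTheory

/-- The density of the χ-distribution with `k` degrees of freedom, regarded as a smooth function
on all of `ℝ`: `p_k(x) = x^{k-1} e^{-x²/2} / (Γ(k/2) · 2^{(k-2)/2})`. -/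
noncomputable def chiDensity (k : ℕ) (x : ℝ) : ℝ :=
  x ^ (k - 1) * Real.exp (-x ^ 2 / 2) /
    (Real.Gamma ((k : ℝ) / 2) * (2 : ℝ) ^ (((k : ℝ) - 2) / 2))

/-!
In polar coordinates the standard Gaussian measure of `{x | ‖x‖ ∈ s}` is `∫_{s ∩ [0, ∞)} p_k`,
so the difference of the two probabilities is `∫_{u-ρ}^{u} p_k`. Since `p_k` is the restriction
of an entire function, its Taylor series at `u` converges on all of `ℝ`, absolutely and uniformly
on compact sets; integrating it term by term over `[u - ρ, u]`, with
`∫_{u-ρ}^{u} (r - u)^j dr = (-1)^j ρ^{j+1} / (j + 1)`, gives the series.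
-/

open scoped ENNReal Real

theorem MeasureTheory.lintegral_fin_nat_prod_eq_prod {n : ℕ} {E : Type*} [MeasurableSpace E]
    {μ : Fin n → Measure E} [∀ i, SigmaFinite (μ i)] {f : Fin n → E → ℝ≥0∞}
    (hf : ∀ i, Measurable (f i)) :
    ∫⁻ x : Fin n → E, ∏ i, f i (x i) ∂(Measure.pi μ) = ∏ i, ∫⁻ x, f i x ∂(μ i) := by
  induction n with
  | zero => simp
  | succ n ih =>
    calc
      _ = ∫⁻ x : E × (Fin n → E), f 0 x.1 * ∏ i : Fin n, f i.succ (x.2 i)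
          ∂((μ 0).prod (Measure.pi fun i => μ i.succ)) := by
        rw [← ((measurePreserving_piFinSuccAbove μ 0).symm).lintegral_comp_emb
          (MeasurableEquiv.measurableEmbedding _)]
        simp_rw [MeasurableEquiv.piFinSuccAbove_symm_apply, Fin.insertNthEquiv,
          Fin.prod_univ_succ, Fin.insertNth_zero, Equiv.coe_fn_mk, Fin.cons_succ,
          Fin.zero_succAbove, cast_eq, Fin.cons_zero]
      _ = (∫⁻ x, f 0 x ∂μ 0) * ∏ i : Fin n, ∫⁻ x, f i.succ x ∂(μ i.succ) := by
        rw [← ih fun i => hf i.succ, ← lintegral_prod_mul (hf 0).aemeasurable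
          (Finset.measurable_prod _ fun i _ =>
            (hf i.succ).comp (measurable_pi_apply i)).aemeasurable]
      _ = ∏ i, ∫⁻ x, f i x ∂(μ i) := by rw [Fin.prod_univ_succ]

theorem MeasureTheory.Measure.pi_withDensity {n : ℕ} {E : Type*} [MeasurableSpace E]
    {μ : Fin n → Measure E} [∀ i, SigmaFinite (μ i)] {f : Fin n → E → ℝ≥0∞}
    [∀ i, SigmaFinite ((μ i).withDensity (f i))] (hf : ∀ i, Measurable (f i)) :
    Measure.pi (fun i => (μ i).withDensity (f i)) =
      (Measure.pi μ).withDensity fun x => ∏ i, f i (x i) := by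
  refine Measure.pi_eq fun s hs => ?_
  have hbox (x : Fin n → E) : (univ.pi s).indicator (fun x => ∏ i, f i (x i)) x =
      ∏ i, (s i).indicator (f i) (x i) := by
    by_cases hx : ∀ i, x i ∈ s i
    · rw [indicator_of_mem (mem_univ_pi.2 hx)]
      exact Finset.prod_congr rfl fun i _ => (indicator_of_mem (hx i) _).symm
    · obtain ⟨i, hi⟩ := not_forall.1 hx
      rw [indicator_of_notMem (mt mem_univ_pi.1 hx)]
      exact (Finset.prod_eq_zero (Finset.mem_univ i) (indicator_of_notMem hi _)).symm
  rw [withDensity_apply _ (MeasurableSet.univ_pi hs),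
    ← lintegral_indicator (MeasurableSet.univ_pi hs)]
  simp_rw [hbox]
  rw [lintegral_fin_nat_prod_eq_prod fun i => (hf i).indicator (hs i)]
  simp_rw [lintegral_indicator (hs _), withDensity_apply _ (hs _)]

theorem MeasureTheory.Measure.pi_gaussianReal_eq_withDensity (n : ℕ) :
    (Measure.pi fun _ : Fin n => gaussianReal 0 1) =
      volume.withDensity fun x => ∏ i, gaussianPDF 0 1 (x i) := by
  have : SigmaFinite (volume.withDensity (gaussianPDF 0 1)) := by
    rw [← gaussianReal_of_var_ne_zero 0 one_ne_zero]
    infer_instance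
  simp_rw [gaussianReal_of_var_ne_zero 0 one_ne_zero]
  exact Measure.pi_withDensity fun _ => measurable_gaussianPDF 0 1

noncomputable def radialGaussianPDF (k : ℕ) (r : ℝ) : ℝ :=
  (√(2 * π))⁻¹ ^ k * Real.exp (-r ^ 2 / 2)

theorem radialGaussianPDF_nonneg (k : ℕ) (r : ℝ) : 0 ≤ radialGaussianPDF k r := by
  unfold radialGaussianPDF
  positivity

theorem prod_gaussianPDFReal_zero_one {ι : Type*} [Fintype ι] (x : ι → ℝ) :
    ∏ i, gaussianPDFReal 0 1 (x i) = radialGaussianPDF (Fintype.card ι) √(∑ i, x i ^ 2) := by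
  rw [radialGaussianPDF, Real.sq_sqrt (by positivity)]
  simp only [gaussianPDFReal, NNReal.coe_one, mul_one, sub_zero, Finset.prod_mul_distrib,
    Finset.prod_const, Finset.card_univ, ← Real.exp_sum, Finset.sum_div, Finset.sum_neg_distrib,
    neg_div]

/-- The factor `k · vol(B₁) · r^{k-1}` is the area of the sphere of radius `r` in `ℝ^k`. -/
theorem chiDensity_eq_mul (k : ℕ) (hk : k ≠ 0) (r : ℝ) :
    chiDensity k r = k * (volume (Metric.ball (0 : EuclideanSpace ℝ (Fin k)) 1)).toReal *
      (r ^ (k - 1) * radialGaussianPDF k r) := by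
  have hball : (volume (Metric.ball (0 : EuclideanSpace ℝ (Fin k)) 1)).toReal =
      √π ^ k / Real.Gamma (k / 2 + 1) := by
    have : NeZero k := ⟨hk⟩
    rw [EuclideanSpace.volume_ball, Fintype.card_fin, ENNReal.ofReal_one, one_pow, one_mul,
      ENNReal.toReal_ofReal (by positivity)]
  have hGamma : Real.Gamma (k / 2 + 1) = k / 2 * Real.Gamma (k / 2) :=
    Real.Gamma_add_one (by positivity)
  have hpow : (2 : ℝ) ^ (((k : ℝ) - 2) / 2) = √2 ^ k / 2 := by
    rw [Real.sqrt_eq_rpow, ← Real.rpow_natCast, ← Real.rpow_mul zero_le_two,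
      ← Real.rpow_sub_one two_ne_zero]
    ring_nf
  have hk0 : (0 : ℝ) < k := by positivity
  have hG : 0 < Real.Gamma (k / 2) := Real.Gamma_pos_of_pos (by positivity)
  rw [chiDensity, radialGaussianPDF, hball, hGamma, hpow, Real.sqrt_mul zero_le_two, mul_inv,
    mul_pow, inv_pow, inv_pow]
  field_simp

theorem measureReal_pi_gaussianReal_sqrt_sum_sq_mem_eq_integral (k : ℕ) {s : Set ℝ}
    (hs : MeasurableSet s) :
    (Measure.pi fun _ : Fin k => gaussianReal 0 1).real {x | √(∑ i, x i ^ 2) ∈ s} =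
      ∫ y : EuclideanSpace ℝ (Fin k), s.indicator (radialGaussianPDF k) ‖y‖ := by
  have hnorm : Measurable fun x : Fin k → ℝ => √(∑ i, x i ^ 2) := by fun_prop
  have hA : MeasurableSet {x : Fin k → ℝ | √(∑ i, x i ^ 2) ∈ s} := hnorm hs
  have hφ : Measurable (radialGaussianPDF k) := by unfold radialGaussianPDF; fun_prop
  calc (Measure.pi fun _ : Fin k => gaussianReal 0 1).real {x | √(∑ i, x i ^ 2) ∈ s}
      = (∫⁻ x in {x : Fin k → ℝ | √(∑ i, x i ^ 2) ∈ s},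
          ENNReal.ofReal (radialGaussianPDF k √(∑ i, x i ^ 2))).toReal := by
        rw [measureReal_def, Measure.pi_gaussianReal_eq_withDensity, withDensity_apply _ hA]
        simp_rw [gaussianPDF,
          ← ENNReal.ofReal_prod_of_nonneg fun i _ => gaussianPDFReal_nonneg 0 1 _,
          prod_gaussianPDFReal_zero_one, Fintype.card_fin]
    _ = ∫ x in {x : Fin k → ℝ | √(∑ i, x i ^ 2) ∈ s}, radialGaussianPDF k √(∑ i, x i ^ 2) :=
        (integral_eq_lintegral_of_nonneg_ae
          (Filter.Eventually.of_forall fun _ => radialGaussianPDF_nonneg _ _)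
          (hφ.comp hnorm).aestronglyMeasurable).symm
    _ = ∫ x : Fin k → ℝ, s.indicator (radialGaussianPDF k) √(∑ i, x i ^ 2) := by
        rw [← integral_indicator hA]
        rfl
    _ = ∫ y : EuclideanSpace ℝ (Fin k), s.indicator (radialGaussianPDF k) ‖y‖ := by
        rw [← (EuclideanSpace.volume_preserving_symm_measurableEquiv_toLp (Fin k)).integral_comp']
        simp [EuclideanSpace.norm_eq]

theorem integral_indicator_radialGaussianPDF_norm (k : ℕ) (hk : k ≠ 0) {s : Set ℝ}
    (hs : MeasurableSet s) :
    ∫ y : EuclideanSpace ℝ (Fin k), s.indicator (radialGaussianPDF k) ‖y‖ =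
      ∫ r in s ∩ Ici 0, chiDensity k r := by
  have : NeZero k := ⟨hk⟩
  rw [integral_fun_norm_addHaar, finrank_euclideanSpace_fin, measureReal_def,
    ← integral_Ici_eq_integral_Ioi, nsmul_eq_mul, smul_eq_mul, ← integral_const_mul,
    ← integral_const_mul, Set.inter_comm, ← setIntegral_indicator hs]
  refine setIntegral_congr_fun measurableSet_Ici fun r _ => ?_
  simp only [smul_eq_mul, indicator, chiDensity_eq_mul k hk]
  split_ifs <;> ring

theorem measureReal_pi_gaussianReal_sqrt_sum_sq_mem (k : ℕ) (hk : k ≠ 0) {s : Set ℝ}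
    (hs : MeasurableSet s) :
    (Measure.pi fun _ : Fin k => gaussianReal 0 1).real {x | √(∑ i, x i ^ 2) ∈ s} =
      ∫ r in s ∩ Ici 0, chiDensity k r :=
  (measureReal_pi_gaussianReal_sqrt_sum_sq_mem_eq_integral k hs).trans
    (integral_indicator_radialGaussianPDF_norm k hk hs)

theorem iteratedDeriv_re_comp_ofReal {g : ℂ → ℂ} (hg : Differentiable ℂ g) (n : ℕ) :
    iteratedDeriv n (fun x : ℝ => (g x).re) = fun x : ℝ => (iteratedDeriv n g x).re := by
  induction n with
  | zero => simp
  | succ n ih =>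
    have hgn : Differentiable ℂ (iteratedDeriv n g) :=
      (hg.contDiff (n := ⊤)).differentiable_iteratedDeriv n (by simp)
    ext x
    rw [iteratedDeriv_succ, iteratedDeriv_succ, ih]
    exact (hgn x).hasDerivAt.real_of_complex.deriv

theorem hasSum_taylorSeries_of_entire_ofReal {f : ℝ → ℝ} {g : ℂ → ℂ} (hg : Differentiable ℂ g)
    (hfg : ∀ x : ℝ, (f x : ℂ) = g x) (u r : ℝ) :
    HasSum (fun n => iteratedDeriv n f u / n.factorial * (r - u) ^ n) (f r) := by
  obtain rfl : f = fun x : ℝ => (g x).re := funext fun x => by rw [← hfg, Complex.ofReal_re]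
  simp_rw [iteratedDeriv_re_comp_ofReal hg]
  convert (Complex.hasSum_taylorSeries_of_entire hg (u : ℂ) (r : ℂ)).mapL Complex.reCLM using 2
  · rw [← Complex.ofReal_sub, ← Complex.ofReal_pow, ← Complex.ofReal_natCast, ← Complex.ofReal_inv,
      smul_eq_mul, smul_eq_mul, ← mul_assoc, ← Complex.ofReal_mul, Complex.reCLM_apply,
      Complex.re_ofReal_mul]
    ring
  · rfl

theorem summable_abs_mul_pow_of_summable_mul_pow {c : ℕ → ℝ} {s t : ℝ}
    (hs : Summable fun n => c n * s ^ n) (ht : 0 ≤ t) (hts : t < s) :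
    Summable fun n => |c n| * t ^ n := by
  obtain ⟨M, hM⟩ := hs.tendsto_atTop_zero.norm.bddAbove_range
  have hs0 : 0 < s := ht.trans_lt hts
  have hq0 : 0 ≤ t / s := div_nonneg ht hs0.le
  have hq1 : t / s < 1 := (div_lt_one hs0).2 hts
  refine Summable.of_nonneg_of_le (fun n => by positivity) (fun n => ?_)
    ((summable_geometric_of_lt_one hq0 hq1).mul_left M)
  calc |c n| * t ^ n = ‖c n * s ^ n‖ * (t / s) ^ n := by
        rw [norm_mul, norm_pow, Real.norm_eq_abs, Real.norm_eq_abs, abs_of_pos hs0, div_pow,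
          mul_assoc, mul_div_cancel₀ _ (pow_pos hs0 n).ne']
    _ ≤ M * (t / s) ^ n := by gcongr; exact hM (mem_range_self n)

theorem hasSum_intervalIntegral_of_hasSum_mul_pow {f : ℝ → ℝ} {c : ℕ → ℝ} {u ρ : ℝ}
    (hρ : 0 ≤ ρ) (hf : ∀ r, HasSum (fun n => c n * (r - u) ^ n) (f r))
    (hc : Summable fun n => |c n| * ρ ^ n) :
    HasSum (fun n => c n * ((-1) ^ n * ρ ^ (n + 1) / (n + 1))) (∫ r in (u - ρ)..u, f r) := by
  have hmoment (n : ℕ) : ∫ r in (u - ρ)..u, (r - u) ^ n = (-1) ^ n * ρ ^ (n + 1) / (n + 1) := by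
    rw [intervalIntegral.integral_comp_sub_right (fun x => x ^ n) u, integral_pow, sub_self,
      sub_sub_cancel_left, zero_pow n.succ_ne_zero, neg_pow, pow_succ (-1 : ℝ) n]
    ring
  have hdom := intervalIntegral.hasSum_integral_of_dominated_convergence (μ := volume)
    (a := u - ρ) (b := u) (fun n _ => |c n| * ρ ^ n)
    (fun n => (by fun_prop : Continuous fun r => c n * (r - u) ^ n).aestronglyMeasurable)
    (fun n => Filter.Eventually.of_forall fun r hr => ?_)
    (Filter.Eventually.of_forall fun _ _ => hc) intervalIntegrable_const
    (Filter.Eventually.of_forall fun r _ => hf r)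
  · simpa only [intervalIntegral.integral_const_mul, hmoment] using hdom
  · rw [uIoc_of_le (by linarith)] at hr
    rw [Real.norm_eq_abs, abs_mul, abs_pow]
    gcongr
    exact abs_le.2 ⟨by linarith [hr.1], by linarith [hr.2]⟩

section EntireRestriction

variable {f : ℝ → ℝ} {g : ℂ → ℂ} (hg : Differentiable ℂ g) (hfg : ∀ x : ℝ, (f x : ℂ) = g x)
include hg hfg

theorem summable_abs_taylorCoeff_mul_pow_of_entire_ofReal (u : ℝ) {ρ : ℝ} (hρ : 0 ≤ ρ) :
    Summable fun n => |iteratedDeriv n f u / n.factorial| * ρ ^ n :=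
  summable_abs_mul_pow_of_summable_mul_pow (s := ρ + 1)
    (by simpa using (hasSum_taylorSeries_of_entire_ofReal hg hfg u (u + (ρ + 1))).summable) hρ
    (lt_add_one ρ)

theorem hasSum_intervalIntegral_of_entire_ofReal (u : ℝ) {ρ : ℝ} (hρ : 0 ≤ ρ) :
    HasSum (fun n => ρ ^ (n + 1) / (n + 1).factorial * ((-1) ^ n * iteratedDeriv n f u))
      (∫ r in (u - ρ)..u, f r) := by
  convert hasSum_intervalIntegral_of_hasSum_mul_pow hρ
    (hasSum_taylorSeries_of_entire_ofReal hg hfg u)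
    (summable_abs_taylorCoeff_mul_pow_of_entire_ofReal hg hfg u hρ) using 2 with n
  have : (n.factorial : ℝ) ≠ 0 := by positivity
  rw [Nat.factorial_succ, Nat.cast_mul]
  push_cast
  field_simp

theorem summable_abs_integratedTaylorSeries_of_entire_ofReal (u : ℝ) {ρ : ℝ} (hρ : 0 ≤ ρ) :
    Summable fun n => |ρ ^ (n + 1) / (n + 1).factorial * ((-1) ^ n * iteratedDeriv n f u)| := by
  refine Summable.of_nonneg_of_le (fun n => abs_nonneg _) (fun n => ?_)
    ((summable_abs_taylorCoeff_mul_pow_of_entire_ofReal hg hfg u hρ).mul_left ρ)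
  have hfac : (n.factorial : ℝ) ≤ (n + 1).factorial := by exact_mod_cast Nat.factorial_le n.le_succ
  calc |ρ ^ (n + 1) / (n + 1).factorial * ((-1) ^ n * iteratedDeriv n f u)|
      = ρ ^ (n + 1) / (n + 1).factorial * |iteratedDeriv n f u| := by
        simp [abs_mul, abs_div, abs_of_nonneg hρ]
    _ ≤ ρ ^ (n + 1) / n.factorial * |iteratedDeriv n f u| := by gcongr
    _ = ρ * (|iteratedDeriv n f u / n.factorial| * ρ ^ n) := by
        rw [abs_div, Nat.abs_cast, pow_succ]
        ring

end EntireRestriction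

theorem exists_differentiable_ofReal_eq_chiDensity (k : ℕ) :
    ∃ g : ℂ → ℂ, Differentiable ℂ g ∧ ∀ x : ℝ, (chiDensity k x : ℂ) = g x :=
  ⟨fun z => z ^ (k - 1) * Complex.exp (-z ^ 2 / 2) /
      ((Real.Gamma ((k : ℝ) / 2) * (2 : ℝ) ^ (((k : ℝ) - 2) / 2) : ℝ) : ℂ),
    by fun_prop, fun x => by push_cast [chiDensity, Complex.ofReal_exp]; rfl⟩

theorem measureReal_le_eq_add_measureReal_Ico {α : Type*} [MeasurableSpace α] (μ : Measure α)
    [IsFiniteMeasure μ] {f : α → ℝ} (hf : Measurable f) {a b : ℝ} (hab : a ≤ b) :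
    μ.real {x | a ≤ f x} = μ.real {x | b ≤ f x} + μ.real {x | f x ∈ Ico a b} := by
  have hunion : {x | a ≤ f x} = f ⁻¹' Ico a b ∪ f ⁻¹' Ici b := by
    rw [← preimage_union, Ico_union_Ici_eq_Ici hab]
    rfl
  have hdisj : Disjoint (f ⁻¹' Ico a b) (f ⁻¹' Ici b) :=
    ((Iio_disjoint_Ici le_rfl).mono_left Ico_subset_Iio_self).preimage f
  rw [hunion, measureReal_union hdisj (hf measurableSet_Ici), add_comm]
  rfl

theorem gaussian_tube_norm_general (k : ℕ) (hk : 1 ≤ k) (u ρ : ℝ)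
    (hρ₀ : 0 ≤ ρ) (hρu : ρ ≤ u) :
    Summable (fun j : ℕ =>
      |ρ ^ (j + 1) / (Nat.factorial (j + 1) : ℝ) *
        ((-1 : ℝ) ^ j * iteratedDeriv j (chiDensity k) u)|) ∧
    ((Measure.pi fun _ : Fin k => gaussianReal 0 1)
        {x | Real.sqrt (∑ i, x i ^ 2) ≥ u - ρ}).toReal =
      ((Measure.pi fun _ : Fin k => gaussianReal 0 1)
          {x | Real.sqrt (∑ i, x i ^ 2) ≥ u}).toReal +
        ∑' j : ℕ, ρ ^ (j + 1) / (Nat.factorial (j + 1) : ℝ) *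
          ((-1 : ℝ) ^ j * iteratedDeriv j (chiDensity k) u) := by
  obtain ⟨g, hg, hchi⟩ := exists_differentiable_ofReal_eq_chiDensity k
  refine ⟨summable_abs_integratedTaylorSeries_of_entire_ofReal hg hchi u hρ₀, ?_⟩
  have hnorm : Measurable fun x : Fin k → ℝ => √(∑ i, x i ^ 2) := by fun_prop
  have hIco : Ico (u - ρ) u ∩ Ici 0 = Ico (u - ρ) u :=
    inter_eq_left.2 (Ico_subset_Ici_self.trans (Ici_subset_Ici.2 (sub_nonneg.2 hρu)))
  rw [← measureReal_def, ← measureReal_def,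
    measureReal_le_eq_add_measureReal_Ico _ hnorm (sub_le_self u hρ₀),
    measureReal_pi_gaussianReal_sqrt_sum_sq_mem k (by omega) measurableSet_Ico, hIco,
    integral_Ico_eq_integral_Ioc, ← intervalIntegral.integral_of_le (sub_le_self u hρ₀),
    (hasSum_intervalIntegral_of_entire_ofReal hg hchi u hρ₀).tsum_eq]

/-- for `k ≥ 1`, `u > 0`, `0 ≤ ρ ≤ u`, and `X` a vector of `k` i.i.d. standard
Gaussians, `P(‖X‖ ≥ u − ρ) = P(‖X‖ ≥ u) + Σ_{j=1}^∞ (ρ^j/j!) (-1)^{j-1} p_k^{(j-1)}(u)`,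
the series converging absolutely. -/
theorem gaussian_tube_norm (k : ℕ) (hk : 1 ≤ k) (u ρ : ℝ) (hu : 0 < u)
    (hρ₀ : 0 ≤ ρ) (hρu : ρ ≤ u) :
    Summable (fun j : ℕ =>
      |ρ ^ (j + 1) / (Nat.factorial (j + 1) : ℝ) *
        ((-1 : ℝ) ^ j * iteratedDeriv j (chiDensity k) u)|) ∧
    ((Measure.pi fun _ : Fin k => gaussianReal 0 1)
        {x | Real.sqrt (∑ i, x i ^ 2) ≥ u - ρ}).toReal =
      ((Measure.pi fun _ : Fin k => gaussianReal 0 1)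
          {x | Real.sqrt (∑ i, x i ^ 2) ≥ u}).toReal +
        ∑' j : ℕ, ρ ^ (j + 1) / (Nat.factorial (j + 1) : ℝ) *
          ((-1 : ℝ) ^ j * iteratedDeriv j (chiDensity k) u) :=
  gaussian_tube_norm_general k hk u ρ hρ₀ hρu
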